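/- arXiv:1508.04495 — 2 statements merged into one kernel-verified Lean document; each statement's English description precedes it below -/
import Mathlib

section
/- Let $L$ be a Lie algebra over a field $k$ and let $\lambda \in (L/[L,L])^*$ with $\lambda \neq 0$. Viewing $\lambda$ as an element of $L^*$ vanishing on $[L,L]$, set $K = \ker\lambda \subseteq L$. Then there is a natural isomorphism $H^1(L; k_\lambda) \cong \mathrm{Hom}_{L/K}(K/[K,K], k_\lambda)$. -/
/-!
The isomorphism is induced by restricting a derivation `d : L → k_λ` to `K = ker λ`; the
derivation identity for `ℓ ∈ L`, `ω ∈ K` says exactly that `d|_K` is `L/K`-equivariant.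
Fix `e` with `λ e = 1`, so that `L = k e ⊕ K` via `x ↦ (λ x, x - λ x • e)`. A derivation
vanishing on `K` is then `d e • λ`, an inner derivation; conversely an equivariant `f` on `K`
extends to the derivation `f ∘ (x ↦ x - λ x • e)`, because `λ` kills brackets and
`⁅x, y⁆ = ⁅x, π y⁆ - λ y • ⁅e, π x⁆` with `π x = x - λ x • e`.
-/

open LinearMap (ker)

section KerProj

variable {R M : Type*} [CommRing R] [AddCommGroup M] [Module R M] {lam : M →ₗ[R] R} {e : M}

def kerProj (he : lam e = 1) : M →ₗ[R] ker lam :=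
  (LinearMap.id - lam.smulRight e).codRestrict (ker lam) fun x => by
    simp [LinearMap.mem_ker, he]

theorem coe_kerProj (he : lam e = 1) (x : M) : (kerProj he x : M) = x - lam x • e := rfl

theorem kerProj_of_mem_ker (he : lam e = 1) (ω : ker lam) : kerProj he (ω : M) = ω := by
  ext
  simp [coe_kerProj, LinearMap.mem_ker.mp ω.2]

theorem domRestrict_ker_eq_zero_iff (he : lam e = 1) (d : M →ₗ[R] R) :
    d.domRestrict (ker lam) = 0 ↔ ∃ c : R, c • lam = d := by
  constructor
  · intro hd
    refine ⟨d e, LinearMap.ext fun x => ?_⟩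
    have hπ : d (kerProj he x) = 0 := by simpa using LinearMap.congr_fun hd (kerProj he x)
    rw [coe_kerProj, map_sub, map_smul, sub_eq_zero] at hπ
    simp [hπ, mul_comm]
  · rintro ⟨c, rfl⟩
    ext ω
    simp [LinearMap.mem_ker.mp ω.2]

end KerProj

namespace LieAlgebra

variable {k L : Type*} [Field k] [LieRing L] [LieAlgebra k L] {lam : L →ₗ[k] k}

variable (lam) in
def IsTwistedDerivation (d : L →ₗ[k] k) : Prop :=
  ∀ x y : L, d ⁅x, y⁆ = lam x * d y - lam y * d x

def IsTwistedEquivariant (hbr : ∀ x y : L, lam ⁅x, y⁆ = 0) (f : ker lam →ₗ[k] k) : Prop :=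
  ∀ (ℓ : L) (ω : ker lam), f ⟨⁅ℓ, (ω : L)⁆, LinearMap.mem_ker.mpr (hbr ℓ ω)⟩ = lam ℓ * f ω

variable (hbr : ∀ x y : L, lam ⁅x, y⁆ = 0)
include hbr

theorem IsTwistedDerivation.isTwistedEquivariant_domRestrict {d : L →ₗ[k] k}
    (hd : IsTwistedDerivation lam d) : IsTwistedEquivariant hbr (d.domRestrict (ker lam)) := by
  intro ℓ ω
  simp [hd ℓ ω, LinearMap.mem_ker.mp ω.2]

theorem kerProj_lie {e : L} (he : lam e = 1) (x y : L) :
    kerProj he ⁅x, y⁆ = ⟨⁅x, (kerProj he y : L)⁆, LinearMap.mem_ker.mpr (hbr _ _)⟩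
      - lam y • ⟨⁅e, (kerProj he x : L)⁆, LinearMap.mem_ker.mpr (hbr _ _)⟩ := by
  ext
  simp only [coe_kerProj, hbr, zero_smul, sub_zero, AddSubgroupClass.coe_sub, SetLike.val_smul,
    lie_sub, lie_smul, lie_self, smul_zero]
  rw [← lie_skew e x, smul_neg]
  abel

theorem IsTwistedEquivariant.isTwistedDerivation_comp_kerProj {f : ker lam →ₗ[k] k}
    (hf : IsTwistedEquivariant hbr f) {e : L} (he : lam e = 1) :
    IsTwistedDerivation lam (f ∘ₗ kerProj he) := by
  intro x y
  rw [LinearMap.comp_apply, kerProj_lie hbr he, map_sub, map_smul, hf x, hf e, he, smul_eq_mul]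
  simp only [LinearMap.comp_apply]
  ring

end LieAlgebra

theorem stmt9_general (k : Type*) [Field k] (L : Type*) [LieRing L] [LieAlgebra k L]
    (lam : L →ₗ[k] k) (hbr : ∀ x y : L, lam ⁅x, y⁆ = 0) (hne : lam ≠ 0)
    (D ID : Submodule k (L →ₗ[k] k))
    (hD : ∀ d : L →ₗ[k] k, d ∈ D ↔ ∀ x y : L, d ⁅x, y⁆ = lam x * d y - lam y * d x)
    (hID : ID = Submodule.span k {lam})
    (H : Submodule k (↥(LinearMap.ker lam) →ₗ[k] k))
    (hH : ∀ f : ↥(LinearMap.ker lam) →ₗ[k] k,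
      f ∈ H ↔ ∀ (ℓ : L) (ω : LinearMap.ker lam),
        f ⟨⁅ℓ, (ω : L)⁆, (LinearMap.mem_ker).mpr (hbr ℓ (ω : L))⟩ = lam ℓ * f ω) :
    Nonempty ((@HasQuotient.Quotient ↥D (Submodule k ↥D)
      (@Submodule.hasQuotient k ↥D _ D.addCommGroup D.module)
      (Submodule.comap D.subtype ID)) ≃ₗ[k] ↥H) := by
  obtain ⟨e, he⟩ := LinearMap.surjective hne 1
  let restrict : D →ₗ[k] H := (LinearMap.domRestrict' (ker lam) ∘ₗ D.subtype).codRestrict H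
    fun d => (hH _).2 (LieAlgebra.IsTwistedDerivation.isTwistedEquivariant_domRestrict hbr ((hD d).1 d.2))
  have hsurj : Function.Surjective restrict := by
    rintro ⟨f, hf⟩
    have hd := LieAlgebra.IsTwistedEquivariant.isTwistedDerivation_comp_kerProj hbr ((hH f).1 hf) he
    refine ⟨⟨f ∘ₗ kerProj he, (hD _).2 hd⟩, Subtype.ext (LinearMap.ext fun ω => ?_)⟩
    simp [restrict, kerProj_of_mem_ker]
  have hker : ker restrict = Submodule.comap D.subtype ID := by
    ext d
    simp only [LinearMap.mem_ker, Submodule.mem_comap, hID, Submodule.mem_span_singleton,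
      ← domRestrict_ker_eq_zero_iff he]
    exact Subtype.ext_iff
  exact ⟨(Submodule.quotEquivOfEq _ _ hker.symm).trans 
    (@LinearMap.quotKerEquivOfSurjective k D H _ _ _ _ _ restrict hsurj)⟩

/-- For a nonzero functional `λ` on `L` vanishing on `[L,L]`, with `K = ker λ`, there is
an isomorphism `H¹(L; k_λ) ≅ Hom_{L/K}(K/[K,K], k_λ)`.  Here `H¹(L; k_λ)` is the quotient
of the space `D` of derivations `d : L → k_λ` (i.e. `d⁅x,y⁆ = λ(x)d(y) - λ(y)d(x)`) by the
space `ID = k·λ` of inner derivations, and `Hom_{L/K}(K/[K,K], k_λ)` is the space `H` of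
functionals `f` on `K` satisfying `f(⁅ℓ,ω⁆) = λ(ℓ)·f(ω)` for all `ℓ ∈ L`, `ω ∈ K`. -/
theorem stmt9 (k : Type*) [Field k] (L : Type*) [LieRing L] [LieAlgebra k L]
    (lam : L →ₗ[k] k) (hbr : ∀ x y : L, lam ⁅x, y⁆ = 0) (hne : lam ≠ 0)
    (D ID : Submodule k (L →ₗ[k] k))
    (hD : ∀ d : L →ₗ[k] k, d ∈ D ↔ ∀ x y : L, d ⁅x, y⁆ = lam x * d y - lam y * d x)
    (hID : ID = Submodule.span k {lam})
    (hle : ID ≤ D)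
    (H : Submodule k (↥(LinearMap.ker lam) →ₗ[k] k))
    (hH : ∀ f : ↥(LinearMap.ker lam) →ₗ[k] k,
      f ∈ H ↔ ∀ (ℓ : L) (ω : LinearMap.ker lam),
        f ⟨⁅ℓ, (ω : L)⁆, (LinearMap.mem_ker).mpr (hbr ℓ (ω : L))⟩ = lam ℓ * f ω) :
    Nonempty ((@HasQuotient.Quotient ↥D (Submodule k ↥D)
      (@Submodule.hasQuotient k ↥D _ D.addCommGroup D.module)
      (Submodule.comap D.subtype ID)) ≃ₗ[k] ↥H) :=
  stmt9_general k L lam hbr hne D ID hD hID H hH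
end

section
/- Let $R$ be a commutative ring containing $1/2$ and let $\mathcal{Q}$ be an associative unital $R$-algebra with elements $T_1, T_2$ satisfying $T_1^2 = t_1^2$, $T_2^2 = t_2^2$ (central units of $R$), and $T_1 T_2 = -T_2 T_1$. Define $F : \mathcal{Q} \oplus \mathcal{Q} \to \mathcal{Q}$ by $F(x,y) = (1+T_1)x - (1+T_2)y$ and $\mathbf{sc} : \mathcal{Q} \to \mathcal{Q}\oplus\mathcal{Q}$ by $\mathbf{sc}(q) = (\tfrac{1-T_2}{2}q, \tfrac{T_1-1}{2}q)$. Then $F$ and $\mathbf{sc}$ are homomorphisms of right $\mathcal{Q}$-modules and $F \circ \mathbf{sc} = \mathrm{id}_{\mathcal{Q}}$. Consequently the short exact sequence $0 \to \ker F \to \mathcal{Q}\oplus\mathcal{Q} \xrightarrow{F} \mathcal{Q} \to 0$ is split and $O = \ker F$ is a projective right $\mathcal{Q}$-module. -/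
/-- In the generalized quaternion algebra `Q` (over a commutative ring `R` containing
`1/2`, with `T₁² = t₁²`, `T₂² = t₂²` central units and `T₁T₂ = -T₂T₁`), the maps
`F(x,y) = (1+T₁)x - (1+T₂)y` and `sc(q) = ((1-T₂)/2 · q, (T₁-1)/2 · q)` are right
`Q`-module homomorphisms with `F ∘ sc = id`.  Consequently the sequence
`0 → O → Q ⊕ Q → Q → 0` (with `O = ker F`) is split: every element of `Q ⊕ Q`
decomposes uniquely as an element of `O` plus an element of `sc(Q)`, so `O` is a
projective right `Q`-module (a direct summand of the free module `Q ⊕ Q`). -/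
theorem stmt17 (R Q : Type*) [CommRing R] [Ring Q] [Algebra R Q] [Invertible (2 : R)]
    (T1 T2 : Q) (t1sq t2sq : Rˣ)
    (h1 : T1 * T1 = algebraMap R Q t1sq) (h2 : T2 * T2 = algebraMap R Q t2sq)
    (h12 : T1 * T2 = -(T2 * T1))
    (F : Q × Q → Q) (hF : ∀ v : Q × Q, F v = (1 + T1) * v.1 - (1 + T2) * v.2)
    (sc : Q → Q × Q)
    (hsc : ∀ q : Q, sc q = (⅟(2 : R) • ((1 - T2) * q), ⅟(2 : R) • ((T1 - 1) * q))) :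
    (∀ v w : Q × Q, F (v + w) = F v + F w) ∧
    (∀ (v : Q × Q) (q : Q), F (v.1 * q, v.2 * q) = F v * q) ∧
    (∀ q q' : Q, sc (q + q') = sc q + sc q') ∧
    (∀ q q' : Q, sc (q * q') = ((sc q).1 * q', (sc q).2 * q')) ∧
    (∀ q : Q, F (sc q) = q) ∧
    (∀ v : Q × Q, ∃! w : (Q × Q) × Q, F w.1 = 0 ∧ v = w.1 + sc w.2) := by
  have Fadd : ∀ v w : Q × Q, F (v + w) = F v + F w := by
    intro v w
    simp only [hF, Prod.fst_add, Prod.snd_add]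
    noncomm_ring
  have Fsub : ∀ v w : Q × Q, F (v - w) = F v - F w := by
    intro v w
    simp only [hF, Prod.fst_sub, Prod.snd_sub]
    noncomm_ring
  have Fsc : ∀ q : Q, F (sc q) = q := by
    intro q
    rw [hsc, hF]
    simp only
    rw [mul_smul_comm, mul_smul_comm, ← smul_sub]
    have h12' : T1 * T2 + T2 * T1 = 0 := by rw [h12]; abel
    have key : (1 + T1) * ((1 - T2) * q) - (1 + T2) * ((T1 - 1) * q)
        = q + q - (T1 * T2 + T2 * T1) * q := by noncomm_ring
    rw [key, h12', zero_mul, sub_zero]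
    have hqq : q + q = (2 : R) • q := by
      rw [two_smul]
    rw [hqq, smul_smul, invOf_mul_self, one_smul]
  refine ⟨Fadd, ?_, ?_, ?_, Fsc, ?_⟩
  · intro v q
    simp only [hF]
    noncomm_ring
  · intro q q'
    simp only [hsc, Prod.mk_add_mk]
    rw [Prod.mk.injEq]
    constructor <;> rw [← smul_add] <;> noncomm_ring
  · intro q q'
    simp only [hsc]
    rw [Prod.mk.injEq]
    constructor <;> rw [smul_mul_assoc] <;> noncomm_ring
  · intro v
    refine ⟨⟨v - sc (F v), F v⟩, ⟨?_, by simp⟩, ?_⟩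
    · rw [Fsub, Fsc, sub_self]
    · rintro ⟨w1, w2⟩ ⟨hw1, hw2⟩
      have hFv : F v = w2 := by
        rw [hw2, Fadd, hw1, Fsc, zero_add]
      have : w1 = v - sc (F v) := by
        rw [hFv, hw2]; abel
      simp [this, hFv]
end
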